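/- arXiv:2405.04266 — 2 statements merged into one kernel-verified Lean document; each statement's English description precedes it below -/
import Mathlib

section
/- Let v ∈ V and let t > max_{w ∈ V} ℓ_max(w) be a round such that t is not a platinum round for v and η_t(v) ≤ 0.0001. If d_t(v) > 0.01 and d_t^L(v) < 0.01·d_t(v), then conditioned on any such history F_t, with probability at least 0.97 we have d_{t+1}(v) < 0.6·d_t(v) or round t+1 is a platinum round for v. -/
/-!
Fix the configuration `c = ℓ_t`. If neither round `t` nor round `t + 1` is platinum for `v`, then
each neighbour `u` of `v` has `p_{t+1}(u) ≤ p_t(u) / 2` as soon as some neighbour of `u` beeped.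
If none did, then, since prominent vertices always beep, `u ∉ S_t` and `μ_t(u) > 0`, and
`p_{t+1}(u) ≤ 2 p_t(u)`, or `≤ 2 · 2^{-ℓ_max(u)}` if `u` sat at its top level; such a `u` that is
not light has `d_t(u) > 10`. Summing over `N(v)`,
`d_{t+1}(v) ≤ d_t(v) / 2 + 2 d_t^L(v) + 2 η_t(v) + 2 X`, where `X` is the beeping mass of the
neighbours `u` with `d_t(u) > 10` none of whose neighbours beeped. Each of these is silenced with
probability at most `e^{-d_t(u)} ≤ e^{-10}`, so by Markov's inequality `X ≤ 0.03 d_t(v)` with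
probability at least `0.97`, and then `d_{t+1}(v) < 0.6 d_t(v)`. The randomness of round `t` is
independent of `F_t`, so this bound holds on every `F_t`-event on which `ℓ_t` is constant, and
`H` is a countable disjoint union of such events.
-/

open MeasureTheory ProbabilityTheory Real
open scoped ENNReal Classical

noncomputable section

namespace BeepMIS

variable {V : Type} [Fintype V] [DecidableEq V]

/-- Beeping probability of a vertex, as a function of the current level configuration. -/
def beepP (lmax : V → ℤ) (ℓ : V → ℤ) (v : V) : ℝ :=
  if ℓ v ≤ 0 then 1 else if ℓ v = lmax v then 0 else (2 : ℝ) ^ (-(ℓ v))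

/-- The level-update rule of the algorithm, given the current levels `ℓ` and
the set `b` of vertices that beeped in the current round. -/
def updateLevel (G : SimpleGraph V) (lmax : V → ℤ) (ℓ : V → ℤ) (b : V → Prop) (v : V) : ℤ :=
  if ∃ u, G.Adj v u ∧ b u then min (ℓ v + 1) (lmax v)
  else if b v then -lmax v
  else max (ℓ v - 1) 1

/-- The level process, driven by the i.i.d. uniform random variables `U`.
Rounds are indexed from `1`; `level … 1 = ℓ₁` is the (arbitrary) initial configuration,
and in round `t ≥ 1` vertex `v` beeps iff `U t v ω < beepP lmax (level … t) v`. -/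
def level (G : SimpleGraph V) (lmax : V → ℤ) (ℓ₁ : V → ℤ) {Ω : Type}
    (U : ℕ → V → Ω → ℝ) (ω : Ω) : ℕ → V → ℤ
  | 0 => ℓ₁
  | t + 1 =>
    if t = 0 then ℓ₁
    else
      updateLevel G lmax (level G lmax ℓ₁ U ω t)
        (fun v => U t v ω < beepP lmax (level G lmax ℓ₁ U ω t) v)

/-- `μ_t(v) = min_{u ∈ N(v)} ℓ_t(u)/ℓ_max(u)`, with value `1` if `N(v) = ∅`. -/
def muVal (G : SimpleGraph V) [DecidableRel G.Adj] (lmax : V → ℤ) (ℓ : V → ℤ) (v : V) : ℝ :=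
  if h : (G.neighborFinset v).Nonempty then
    (G.neighborFinset v).inf' h (fun u => (ℓ u : ℝ) / (lmax u : ℝ))
  else 1

/-- The set `I_t` of MIS vertices. -/
def misSet (G : SimpleGraph V) [DecidableRel G.Adj] (lmax : V → ℤ) (ℓ : V → ℤ) : Set V :=
  {v | ℓ v = -lmax v ∧ muVal G lmax ℓ v = 1}

/-- The set `S_t = I_t ∪ N(I_t)` of stable vertices. -/
def stableSet (G : SimpleGraph V) [DecidableRel G.Adj] (lmax : V → ℤ) (ℓ : V → ℤ) : Set V :=
  misSet G lmax ℓ ∪ {v | ∃ u ∈ misSet G lmax ℓ, G.Adj u v}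

/-- `d_t(v)`: expected number of beeping neighbors of `v`. -/
def dVal (G : SimpleGraph V) [DecidableRel G.Adj] (lmax : V → ℤ) (ℓ : V → ℤ) (v : V) : ℝ :=
  ∑ u ∈ G.neighborFinset v, beepP lmax ℓ u

/-- Round is platinum for `v`: some vertex of `N⁺(v)` is prominent (has level `≤ 0`). -/
def Platinum (G : SimpleGraph V) (ℓ : V → ℤ) (v : V) : Prop :=
  ℓ v ≤ 0 ∨ ∃ u, G.Adj v u ∧ ℓ u ≤ 0

/-- `η_t(v) = Σ_{u ∈ N(v)∖S_t} 2^{−ℓ_max(u)}`. -/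
def eta (G : SimpleGraph V) [DecidableRel G.Adj] (lmax : V → ℤ) (ℓ : V → ℤ) (v : V) : ℝ :=
  ∑ u ∈ G.neighborFinset v,
    if u ∈ stableSet G lmax ℓ then 0 else (2 : ℝ) ^ (-(lmax u))

/-- `η'_t(v) = Σ_{u ∈ N(v)∖S_t, ℓ_max(u) > ℓ_max(v)} 2^{−ℓ_max(v)}`. -/
def eta' (G : SimpleGraph V) [DecidableRel G.Adj] (lmax : V → ℤ) (ℓ : V → ℤ) (v : V) : ℝ :=
  ∑ u ∈ G.neighborFinset v,
    if u ∉ stableSet G lmax ℓ ∧ lmax v < lmax u then (2 : ℝ) ^ (-(lmax v)) else 0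

/-- A vertex is light if `μ_t(v) > 0` and (`d_t(v) ≤ 10` or `ℓ_t(v) ≤ 0`). -/
def Light (G : SimpleGraph V) [DecidableRel G.Adj] (lmax : V → ℤ) (ℓ : V → ℤ) (v : V) : Prop :=
  0 < muVal G lmax ℓ v ∧ (dVal G lmax ℓ v ≤ 10 ∨ ℓ v ≤ 0)

/-- `d_t^L(v)`: expected number of beeping light neighbors of `v`. -/
def dLVal (G : SimpleGraph V) [DecidableRel G.Adj] (lmax : V → ℤ) (ℓ : V → ℤ) (v : V) : ℝ :=
  ∑ u ∈ G.neighborFinset v, if Light G lmax ℓ u then beepP lmax ℓ u else 0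

/-- Round is golden for `v`. -/
def Golden (G : SimpleGraph V) [DecidableRel G.Adj] (lmax : V → ℤ) (ℓ : V → ℤ) (v : V) : Prop :=
  (ℓ v ≤ 1 ∧ dVal G lmax ℓ v ≤ 0.02) ∨ 0.001 < dLVal G lmax ℓ v

/-- The natural filtration `F_t`: the σ-algebra generated by the driving randomness
of the rounds before `t`. -/
def Ft {Ω : Type} [MeasurableSpace Ω] (U : ℕ → V → Ω → ℝ) (t : ℕ) : MeasurableSpace Ω :=
  MeasurableSpace.comap (fun ω => fun p : Fin t × V => U p.1 p.2 ω) inferInstance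

/-- `I` is a maximal independent set of `G`. -/
def IsMIS (G : SimpleGraph V) (I : Set V) : Prop :=
  (∀ u ∈ I, ∀ v ∈ I, ¬ G.Adj u v) ∧ ∀ v, v ∉ I → ∃ u ∈ I, G.Adj u v

end BeepMIS

namespace BeepMIS

variable {V : Type}

lemma beepP_nonneg (lmax ℓ : V → ℤ) (v : V) : 0 ≤ beepP lmax ℓ v := by
  unfold beepP; split_ifs <;> positivity

lemma beepP_of_nonpos {lmax ℓ : V → ℤ} {v : V} (h : ℓ v ≤ 0) : beepP lmax ℓ v = 1 :=
  if_pos h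

lemma beepP_le_zpow {lmax ℓ : V → ℤ} {v : V} (h : 1 ≤ ℓ v) :
    beepP lmax ℓ v ≤ (2 : ℝ) ^ (-ℓ v) := by
  unfold beepP
  split_ifs
  · omega
  · positivity
  · exact le_rfl

def silentHeavyMass [Fintype V] (G : SimpleGraph V) [DecidableRel G.Adj] (lmax c : V → ℤ)
    (b : V → Prop) (v : V) : ℝ :=
  ∑ u ∈ G.neighborFinset v,
    if 10 < dVal G lmax c u ∧ ¬ ∃ w, G.Adj u w ∧ b w then beepP lmax c u else 0

/-- `∀ w, y w < 1` is the almost sure event on which every vertex of level `≤ 0` (beeping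
probability `1`) does beep. -/
def GoodRound [Fintype V] (G : SimpleGraph V) [DecidableRel G.Adj] (lmax c : V → ℤ) (v : V)
    (y : V → ℝ) : Prop :=
  (∀ w, y w < 1) ∧
    silentHeavyMass G lmax c (fun w => y w < beepP lmax c w) v ≤ 0.03 * dVal G lmax c v

section Update

variable [Fintype V] {G : SimpleGraph V} {lmax c : V → ℤ} {b : V → Prop} {u : V}

lemma beepP_updateLevel_of_heard (hlmax : ∀ w, 1 ≤ lmax w) (hheard : ∃ w, G.Adj u w ∧ b w)
    (hu : 1 ≤ c u) :
    beepP lmax (updateLevel G lmax c b) u ≤ beepP lmax c u / 2 := by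
  have hupd : updateLevel G lmax c b u = min (c u + 1) (lmax u) := if_pos hheard
  by_cases hmax : lmax u ≤ c u + 1
  · have hzero : beepP lmax (updateLevel G lmax c b) u = 0 := by
      unfold beepP
      rw [hupd, min_eq_right hmax, if_neg (by linarith [hlmax u]), if_pos rfl]
    rw [hzero]
    exact div_nonneg (beepP_nonneg _ _ _) zero_le_two
  · have hp : beepP lmax c u = (2 : ℝ) ^ (-c u) := by
      unfold beepP; rw [if_neg (by omega), if_neg (by omega)]
    calc beepP lmax (updateLevel G lmax c b) u
        ≤ (2 : ℝ) ^ (-(c u + 1)) := by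
          rw [← min_eq_left (not_le.mp hmax).le, ← hupd]
          exact beepP_le_zpow (by omega)
      _ = beepP lmax c u / 2 := by
          rw [hp, neg_add, zpow_add₀ two_ne_zero, zpow_neg_one, div_eq_mul_inv]

lemma beepP_updateLevel_of_silent (hsilent : ¬ ∃ w, G.Adj u w ∧ b w) (hbu : ¬ b u) :
    beepP lmax (updateLevel G lmax c b) u ≤ 2 * (2 : ℝ) ^ (-c u) := by
  have hupd : updateLevel G lmax c b u = max (c u - 1) 1 := by
    unfold updateLevel; rw [if_neg hsilent, if_neg hbu]
  calc beepP lmax (updateLevel G lmax c b) u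
      ≤ (2 : ℝ) ^ (-updateLevel G lmax c b u) := beepP_le_zpow (by omega)
    _ ≤ (2 : ℝ) ^ (-c u + 1) := zpow_le_zpow_right₀ one_le_two (by omega)
    _ = 2 * (2 : ℝ) ^ (-c u) := by rw [zpow_add_one₀ two_ne_zero, mul_comm]

variable [DecidableRel G.Adj]

section SureBeeps

variable (hlmax : ∀ w, 1 ≤ lmax w) (hsure : ∀ w, c w ≤ 0 → b w)
include hlmax hsure

lemma notMem_stableSet_of_silent (hsilent : ¬ ∃ w, G.Adj u w ∧ b w) (hbu : ¬ b u) :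
    u ∉ stableSet G lmax c := by
  rintro (hmis | ⟨w, hw, hwu⟩)
  · exact hbu (hsure u (by rw [hmis.1]; linarith [hlmax u]))
  · exact hsilent ⟨w, hwu.symm, hsure w (by rw [hw.1]; linarith [hlmax w])⟩

lemma muVal_pos_of_silent (hsilent : ¬ ∃ w, G.Adj u w ∧ b w) : 0 < muVal G lmax c u := by
  unfold muVal
  split_ifs with hne
  · refine (Finset.lt_inf'_iff hne).mpr fun w hw => div_pos ?_ ?_
    · by_contra hcw
      exact hsilent ⟨w, (G.mem_neighborFinset u w).mp hw, hsure w (by exact_mod_cast not_lt.mp hcw)⟩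
    · exact_mod_cast hlmax w
  · exact one_pos

lemma beepP_updateLevel_le (hu : 1 ≤ c u) (hu' : 0 < updateLevel G lmax c b u) :
    beepP lmax (updateLevel G lmax c b) u ≤
      beepP lmax c u / 2
      + 2 * (if Light G lmax c u then beepP lmax c u else 0)
      + 2 * (if u ∈ stableSet G lmax c then 0 else (2 : ℝ) ^ (-lmax u))
      + 2 * (if 10 < dVal G lmax c u ∧ ¬ ∃ w, G.Adj u w ∧ b w then beepP lmax c u else 0) := by
  have hp := beepP_nonneg lmax c u
  have hlightTerm : (0 : ℝ) ≤ if Light G lmax c u then beepP lmax c u else 0 :=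
    ite_nonneg hp le_rfl
  have hstableTerm : (0 : ℝ) ≤ if u ∈ stableSet G lmax c then 0 else (2 : ℝ) ^ (-lmax u) :=
    ite_nonneg le_rfl (by positivity)
  have hheavyTerm : (0 : ℝ) ≤
      if 10 < dVal G lmax c u ∧ ¬ ∃ w, G.Adj u w ∧ b w then beepP lmax c u else 0 :=
    ite_nonneg hp le_rfl
  by_cases hheard : ∃ w, G.Adj u w ∧ b w
  · linarith [beepP_updateLevel_of_heard hlmax hheard hu]
  have hbu : ¬ b u := fun hbu => by
    have hupd : updateLevel G lmax c b u = -lmax u := by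
      unfold updateLevel; rw [if_neg hheard, if_pos hbu]
    linarith [hlmax u]
  have hsilent := beepP_updateLevel_of_silent (lmax := lmax) (c := c) hheard hbu
  rw [if_neg (notMem_stableSet_of_silent hlmax hsure hheard hbu)] at hstableTerm ⊢
  by_cases hmax : c u = lmax u
  · rw [hmax] at hsilent
    linarith
  have hpu : beepP lmax c u = (2 : ℝ) ^ (-c u) := by
    unfold beepP; rw [if_neg (by omega), if_neg hmax]
  rw [← hpu] at hsilent
  by_cases hlight : Light G lmax c u
  · rw [if_pos hlight]
    linarith
  · have hheavy : 10 < dVal G lmax c u := by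
      by_contra hd
      exact hlight ⟨muVal_pos_of_silent hlmax hsure hheard, Or.inl (not_lt.mp hd)⟩
    have hcond : 10 < dVal G lmax c u ∧ ¬ ∃ w, G.Adj u w ∧ b w := ⟨hheavy, hheard⟩
    rw [if_pos hcond]
    linarith

lemma dVal_updateLevel_le {v : V}
    (hv : ∀ u, G.Adj v u → 1 ≤ c u ∧ 0 < updateLevel G lmax c b u) :
    dVal G lmax (updateLevel G lmax c b) v ≤
      dVal G lmax c v / 2 + 2 * dLVal G lmax c v + 2 * eta G lmax c v
      + 2 * silentHeavyMass G lmax c b v := by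
  unfold dVal dLVal eta silentHeavyMass
  simp only [Finset.mul_sum, Finset.sum_div, ← Finset.sum_add_distrib]
  refine Finset.sum_le_sum fun u hu => ?_
  obtain ⟨hcu, hcu'⟩ := hv u ((G.mem_neighborFinset v u).mp hu)
  exact beepP_updateLevel_le hlmax hsure hcu hcu'

lemma dVal_updateLevel_lt_or_platinum {v : V} (hplat : ¬ Platinum G c v)
    (heta : eta G lmax c v ≤ 0.0001) (hd : 0.01 < dVal G lmax c v)
    (hdL : dLVal G lmax c v < 0.01 * dVal G lmax c v)
    (hmass : silentHeavyMass G lmax c b v ≤ 0.03 * dVal G lmax c v) :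
    dVal G lmax (updateLevel G lmax c b) v < 0.6 * dVal G lmax c v ∨
      Platinum G (updateLevel G lmax c b) v := by
  refine or_iff_not_imp_right.mpr fun hplat' => ?_
  unfold Platinum at hplat hplat'
  push Not at hplat hplat'
  have := dVal_updateLevel_le hlmax hsure fun u hu => ⟨hplat.2 u hu, hplat'.2 u hu⟩
  linarith

end SureBeeps

end Update

section Probability

variable {Ω ι : Type*} [MeasurableSpace Ω] {μ : Measure Ω}

lemma measure_preimage_Ici_of_map_eq_uniform {Y : Ω → ℝ} (hY : Measurable Y)
    (hunif : μ.map Y = volume.restrict (Set.Ico 0 1)) {p : ℝ} (hp : 0 ≤ p) :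
    μ (Y ⁻¹' Set.Ici p) = ENNReal.ofReal (1 - p) := by
  rw [← Measure.map_apply hY measurableSet_Ici, hunif, Measure.restrict_apply measurableSet_Ici,
    Set.inter_comm, Set.Ico_inter_Ici, sup_eq_right.mpr hp, Real.volume_Ico]

lemma measure_forall_le_le_exp {Y : ι → Ω → ℝ} (hY : ∀ i, Measurable (Y i))
    (hind : iIndepFun Y μ) (hunif : ∀ i, μ.map (Y i) = volume.restrict (Set.Ico 0 1))
    (s : Finset ι) {p : ι → ℝ} (hp : ∀ i, 0 ≤ p i) :
    μ {ω | ∀ i ∈ s, p i ≤ Y i ω} ≤ ENNReal.ofReal (exp (-∑ i ∈ s, p i)) := by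
  have hset : {ω | ∀ i ∈ s, p i ≤ Y i ω} = ⋂ i ∈ s, Y i ⁻¹' Set.Ici (p i) := by
    ext ω; simp
  rw [hset, hind.meas_biInter fun i _ => ⟨Set.Ici (p i), measurableSet_Ici, rfl⟩,
    ← Finset.sum_neg_distrib, Real.exp_sum,
    ENNReal.ofReal_prod_of_nonneg fun i _ => (exp_pos _).le]
  refine Finset.prod_le_prod' fun i _ => ?_
  rw [measure_preimage_Ici_of_map_eq_uniform (hY i) (hunif i) (hp i)]
  exact ENNReal.ofReal_le_ofReal (by linarith [Real.add_one_le_exp (-p i)])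

lemma measure_lt_sum_indicator_le {s : Finset ι} {a : ι → ℝ} (ha : ∀ i, 0 ≤ a i) {E : ι → Set Ω}
    (hE : ∀ i, MeasurableSet (E i)) {ε : ℝ} (hε : 0 ≤ ε) (hμE : ∀ i ∈ s, μ (E i) ≤ ENNReal.ofReal ε)
    {r : ℝ} (hr : 0 < r) :
    μ {ω | r < ∑ i ∈ s, (E i).indicator (fun _ => a i) ω} ≤
      ENNReal.ofReal (ε * (∑ i ∈ s, a i) / r) := by
  set f : Ω → ℝ≥0∞ := fun ω => ∑ i ∈ s, (E i).indicator (fun _ => ENNReal.ofReal (a i)) ω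
  have hsub : {ω | r < ∑ i ∈ s, (E i).indicator (fun _ => a i) ω} ⊆
      {ω | ENNReal.ofReal r ≤ f ω} := by
    intro ω hω
    refine (ENNReal.ofReal_le_ofReal (le_of_lt hω)).trans_eq ?_
    rw [ENNReal.ofReal_sum_of_nonneg fun i _ => Set.indicator_nonneg (fun _ _ => ha i) ω]
    refine Finset.sum_congr rfl fun i _ => ?_
    by_cases hω : ω ∈ E i <;> simp [hω]
  have hint : ∫⁻ ω, f ω ∂μ ≤ ENNReal.ofReal (ε * ∑ i ∈ s, a i) := by
    rw [lintegral_finsetSum _ fun i _ => measurable_const.indicator (hE i),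
      ENNReal.ofReal_mul hε, ENNReal.ofReal_sum_of_nonneg fun i _ => ha i, Finset.mul_sum]
    refine Finset.sum_le_sum fun i hi => ?_
    rw [lintegral_indicator_const (hE i), mul_comm]
    gcongr
    exact hμE i hi
  calc μ {ω | r < ∑ i ∈ s, (E i).indicator (fun _ => a i) ω}
      ≤ μ {ω | ENNReal.ofReal r ≤ f ω} := measure_mono hsub
    _ ≤ (∫⁻ ω, f ω ∂μ) / ENNReal.ofReal r :=
        meas_ge_le_lintegral_div (by fun_prop (disch := exact hE _))
          (ENNReal.ofReal_pos.mpr hr).ne' ENNReal.ofReal_ne_top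
    _ ≤ ENNReal.ofReal (ε * (∑ i ∈ s, a i) / r) := by
        rw [ENNReal.ofReal_div_of_pos hr]
        exact ENNReal.div_le_div_right hint _

end Probability

lemma exp_neg_ten_le : exp (-10) ≤ 0.0009 := by
  calc exp (-10) = exp (-1) ^ 10 := by rw [← Real.exp_nat_mul]; norm_num
    _ ≤ 0.3678794412 ^ 10 := pow_le_pow_left₀ (exp_pos _).le Real.exp_neg_one_lt_d9.le 10
    _ ≤ 0.0009 := by norm_num

lemma measurableSet_goodRound [Fintype V] (G : SimpleGraph V) [DecidableRel G.Adj]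
    (lmax c : V → ℤ) (v : V) : MeasurableSet {y | GoodRound G lmax c v y} := by
  have hmass : Measurable fun y : V → ℝ =>
      silentHeavyMass G lmax c (fun w => y w < beepP lmax c w) v :=
    Finset.measurable_sum _ fun u _ =>
      Measurable.ite (measurableSet_setOfPred.mpr (by fun_prop)) measurable_const measurable_const
  exact measurableSet_setOfPred.mpr (by unfold GoodRound; fun_prop)

section Round

variable [Fintype V] {G : SimpleGraph V} [DecidableRel G.Adj] {lmax : V → ℤ}
  {Ω : Type*} [MeasurableSpace Ω] {μ : Measure Ω} {Y : V → Ω → ℝ}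
  (hY : ∀ w, Measurable (Y w)) (hind : iIndepFun Y μ)
  (hunif : ∀ w, μ.map (Y w) = volume.restrict (Set.Ico 0 1))
include hY hind hunif

lemma measure_silent_le (c : V → ℤ) (u : V) :
    μ {ω | ¬ ∃ w, G.Adj u w ∧ Y w ω < beepP lmax c w} ≤
      ENNReal.ofReal (exp (-dVal G lmax c u)) := by
  have hset : {ω | ¬ ∃ w, G.Adj u w ∧ Y w ω < beepP lmax c w} =
      {ω | ∀ w ∈ G.neighborFinset u, beepP lmax c w ≤ Y w ω} := by
    ext ω; simp
  rw [hset]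
  exact measure_forall_le_le_exp hY hind hunif _ (beepP_nonneg lmax c)

lemma measure_silentHeavyMass_gt_le (c : V → ℤ) {v : V} (hd : 0 < dVal G lmax c v) :
    μ {ω | 0.03 * dVal G lmax c v <
        silentHeavyMass G lmax c (fun w => Y w ω < beepP lmax c w) v} ≤ ENNReal.ofReal 0.03 := by
  have hE : ∀ u, MeasurableSet
      {ω | 10 < dVal G lmax c u ∧ ¬ ∃ w, G.Adj u w ∧ Y w ω < beepP lmax c w} :=
    fun u => measurableSet_setOfPred.mpr (by fun_prop)
  have hμE : ∀ u ∈ G.neighborFinset v,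
      μ {ω | 10 < dVal G lmax c u ∧ ¬ ∃ w, G.Adj u w ∧ Y w ω < beepP lmax c w} ≤
        ENNReal.ofReal (exp (-10)) := by
    intro u _
    by_cases hu : 10 < dVal G lmax c u
    · calc _ ≤ μ {ω | ¬ ∃ w, G.Adj u w ∧ Y w ω < beepP lmax c w} := measure_mono fun ω h => h.2
        _ ≤ ENNReal.ofReal (exp (-dVal G lmax c u)) := measure_silent_le hY hind hunif c u
        _ ≤ ENNReal.ofReal (exp (-10)) :=
            ENNReal.ofReal_le_ofReal (exp_le_exp.mpr (by linarith))
    · simp [hu]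
  calc _ = μ {ω | 0.03 * dVal G lmax c v < ∑ u ∈ G.neighborFinset v,
        {ω | 10 < dVal G lmax c u ∧ ¬ ∃ w, G.Adj u w ∧ Y w ω < beepP lmax c w}.indicator
          (fun _ => beepP lmax c u) ω} := by
        simp only [silentHeavyMass, Set.indicator_apply, Set.mem_ofPred_eq]
    _ ≤ ENNReal.ofReal (exp (-10) * dVal G lmax c v / (0.03 * dVal G lmax c v)) :=
        measure_lt_sum_indicator_le (beepP_nonneg lmax c) hE (exp_pos _).le hμE
          (r := 0.03 * dVal G lmax c v) (by positivity)
    _ ≤ ENNReal.ofReal 0.03 := by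
        refine ENNReal.ofReal_le_ofReal ((div_le_iff₀ (by positivity)).mpr ?_)
        linarith [mul_le_mul_of_nonneg_right exp_neg_ten_le hd.le]

lemma le_measure_goodRound [IsProbabilityMeasure μ] (c : V → ℤ) {v : V}
    (hd : 0 < dVal G lmax c v) :
    ENNReal.ofReal 0.97 ≤ μ {ω | GoodRound G lmax c v fun w => Y w ω} := by
  set good := {ω | GoodRound G lmax c v fun w => Y w ω}
  have hnull : μ (⋃ w, Y w ⁻¹' Set.Ici 1) = 0 := measure_iUnion_null fun w => by
    rw [measure_preimage_Ici_of_map_eq_uniform (hY w) (hunif w) zero_le_one, sub_self,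
      ENNReal.ofReal_zero]
  have hbad : μ goodᶜ ≤ ENNReal.ofReal 0.03 := calc
    μ goodᶜ ≤ μ ((⋃ w, Y w ⁻¹' Set.Ici 1) ∪ {ω | 0.03 * dVal G lmax c v <
        silentHeavyMass G lmax c (fun w => Y w ω < beepP lmax c w) v}) := by
      refine measure_mono fun ω hω => ?_
      simp only [good, GoodRound, Set.mem_compl_iff, Set.mem_ofPred_eq, not_and_or, not_forall,
        not_lt, not_le] at hω
      rcases hω with ⟨w, hw⟩ | hmass
      · exact Or.inl (Set.mem_iUnion.mpr ⟨w, hw⟩)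
      · exact Or.inr hmass
    _ ≤ μ (⋃ w, Y w ⁻¹' Set.Ici 1) + μ {ω | 0.03 * dVal G lmax c v <
        silentHeavyMass G lmax c (fun w => Y w ω < beepP lmax c w) v} := measure_union_le _ _
    _ ≤ ENNReal.ofReal 0.03 := by
      rw [hnull, zero_add]
      exact measure_silentHeavyMass_gt_le hY hind hunif c hd
  have hsum : ENNReal.ofReal 0.97 + ENNReal.ofReal 0.03 ≤ μ good + ENNReal.ofReal 0.03 := calc
    ENNReal.ofReal 0.97 + ENNReal.ofReal 0.03 = μ Set.univ := by
      rw [← ENNReal.ofReal_add (by norm_num) (by norm_num), measure_univ]; norm_num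
    _ ≤ μ good + μ goodᶜ := measure_univ_le_add_compl good
    _ ≤ μ good + ENNReal.ofReal 0.03 := by gcongr
  exact (ENNReal.add_le_add_iff_right ENNReal.ofReal_ne_top).mp hsum

end Round

lemma comap_pi_le_iSup_comap {Ω ι κ : Type*} {Z : ι → Ω → ℝ} {S : Set ι} {φ : κ → ι}
    (hφ : ∀ k, φ k ∈ S) :
    MeasurableSpace.comap (fun ω k => Z (φ k) ω) MeasurableSpace.pi ≤
      ⨆ i ∈ S, MeasurableSpace.comap (Z i) inferInstance := by
  rw [MeasurableSpace.pi, MeasurableSpace.comap_iSup]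
  refine iSup_le fun k => ?_
  rw [MeasurableSpace.comap_comp]
  exact le_iSup₂_of_le (φ k) (hφ k) le_rfl

section Filtration

variable {Ω : Type} [MeasurableSpace Ω] {U : ℕ → V → Ω → ℝ}

lemma measurable_Ft_round {t s : ℕ} (hs : s < t) : Measurable[Ft U t] fun ω w => U s w ω :=
  (measurable_pi_lambda (fun x : Fin t × V → ℝ => fun w => x (⟨s, hs⟩, w)) fun _ =>
    measurable_pi_apply _).comp (comap_measurable _)

variable (hU : ∀ s w, Measurable (U s w))
include hU

lemma Ft_le (t : ℕ) : Ft U t ≤ ‹MeasurableSpace Ω› :=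
  (measurable_pi_lambda _ fun p : Fin t × V => hU p.1 p.2).comap_le

lemma indep_Ft_round {μ : Measure Ω} (hind : iIndepFun (fun p : ℕ × V => fun ω => U p.1 p.2 ω) μ)
    (t : ℕ) : Indep (Ft U t) (MeasurableSpace.comap (fun ω w => U t w ω) inferInstance) μ := by
  have hsplit := indep_iSup_of_disjoint (fun p : ℕ × V => (hU p.1 p.2).comap_le) hind.iIndep
    (S := {p | p.1 < t}) (T := {p | p.1 = t})
    (Set.disjoint_left.mpr fun p hlt heq => (ne_of_lt hlt) heq)
  refine indep_of_indep_of_le_right (indep_of_indep_of_le_left hsplit ?_) ?_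
  · exact comap_pi_le_iSup_comap (Z := fun p ω => U p.1 p.2 ω) (S := {p : ℕ × V | p.1 < t})
      (φ := fun q : Fin t × V => ((q.1 : ℕ), q.2)) fun q => q.1.2
  · exact comap_pi_le_iSup_comap (Z := fun p ω => U p.1 p.2 ω) (S := {p : ℕ × V | p.1 = t})
      (φ := fun w => (t, w)) fun _ => rfl

end Filtration

section Levels

variable [Fintype V] {G : SimpleGraph V} {lmax ℓ₁ : V → ℤ} {Ω : Type} (U : ℕ → V → Ω → ℝ)

lemma level_succ {t : ℕ} (ht : t ≠ 0) (ω : Ω) :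
    level G lmax ℓ₁ U ω (t + 1) = updateLevel G lmax (level G lmax ℓ₁ U ω t)
      (fun w => U t w ω < beepP lmax (level G lmax ℓ₁ U ω t) w) := by
  rw [level, if_neg ht]

lemma measurable_updateLevel (c : V → ℤ) :
    Measurable fun y : V → ℝ => updateLevel G lmax c (fun w => y w < beepP lmax c w) :=
  measurable_pi_lambda _ fun _ =>
    Measurable.ite (measurableSet_setOfPred.mpr (by fun_prop)) measurable_const
      (Measurable.ite (measurableSet_setOfPred.mpr (by fun_prop)) measurable_const
        measurable_const)

lemma measurable_level [MeasurableSpace Ω] {t s : ℕ} (hs : s ≤ t) :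
    Measurable[Ft U t] fun ω => level G lmax ℓ₁ U ω s := by
  induction s with
  | zero => exact measurable_const
  | succ s ih =>
    rcases eq_or_ne s 0 with rfl | hs0
    · exact measurable_const
    · simp_rw [level_succ U hs0]
      exact (measurable_from_prod_countable_right (f := fun p : (V → ℤ) × (V → ℝ) =>
          updateLevel G lmax p.1 (fun w => p.2 w < beepP lmax p.1 w)) measurable_updateLevel).comp
        ((ih (by omega)).prodMk (measurable_Ft_round (by omega)))

end Levels

lemma le_measure_inter_of_indep {Ω S : Type*} [Countable S] {m₁ m₂ : MeasurableSpace Ω}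
    [MeasurableSpace Ω] {μ : Measure Ω} (hle₁ : m₁ ≤ ‹MeasurableSpace Ω›)
    (hle₂ : m₂ ≤ ‹MeasurableSpace Ω›) (hind : Indep m₁ m₂ μ)
    {X : Ω → S} (hX : ∀ s, MeasurableSet[m₁] {ω | X ω = s}) {H : Set Ω}
    (hH : MeasurableSet[m₁] H) {E : S → Set Ω} (hE : ∀ s, MeasurableSet[m₂] (E s))
    {q : ℝ≥0∞} (hq : ∀ ω ∈ H, q ≤ μ (E (X ω))) :
    q * μ H ≤ μ ({ω | ω ∈ E (X ω)} ∩ H) := by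
  set part : S → Set Ω := fun s => H ∩ {ω | X ω = s}
  have hpart_meas : ∀ s, MeasurableSet[m₁] (part s) := fun s => hH.inter (hX s)
  have hdisj : Pairwise (Function.onFun Disjoint part) := fun s s' hss' =>
    Set.disjoint_left.mpr fun ω h h' => hss' (h.2.symm.trans h'.2)
  have hpart : ∀ s, q * μ (part s) ≤ μ (part s ∩ E s) := fun s => by
    rcases (part s).eq_empty_or_nonempty with hempty | ⟨ω, hωH, rfl⟩
    · simp [hempty]
    · rw [(Indep_iff _ _ _).mp hind _ _ (hpart_meas _) (hE _), mul_comm]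
      gcongr
      exact hq ω hωH
  have hcover : H = ⋃ s, part s := by ext ω; simp [part]
  calc q * μ H = ∑' s, q * μ (part s) := by
        rw [ENNReal.tsum_mul_left, hcover, measure_iUnion hdisj fun s => hle₁ _ (hpart_meas s)]
    _ ≤ ∑' s, μ (part s ∩ E s) := ENNReal.tsum_le_tsum hpart
    _ = μ (⋃ s, part s ∩ E s) :=
        (measure_iUnion (fun s s' hss' => (hdisj hss').mono Set.inter_subset_left
          Set.inter_subset_left) fun s => (hle₁ _ (hpart_meas s)).inter (hle₂ _ (hE s))).symm
    _ ≤ μ ({ω | ω ∈ E (X ω)} ∩ H) := by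
        refine measure_mono (Set.iUnion_subset fun s ω ⟨⟨hωH, hXs⟩, hωE⟩ => ⟨?_, hωH⟩)
        rwa [Set.mem_ofPred_eq, hXs]

/-- if on `H ∈ F_t` round `t > max_w ℓ_max(w)` is not platinum for `v`,
`η_t(v) ≤ 0.0001`, `d_t(v) > 0.01` and `d_t^L(v) < 0.01 d_t(v)`, then with conditional
probability at least `0.97`, `d_{t+1}(v) < 0.6 d_t(v)` or round `t+1` is platinum for `v`. -/
theorem statement11 :
    ∀ (V : Type) [Fintype V] [DecidableEq V] (G : SimpleGraph V) [DecidableRel G.Adj]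
      (lmax : V → ℤ), (∀ v, 1 ≤ lmax v) →
      ∀ (Ω : Type) [MeasurableSpace Ω] (μ : MeasureTheory.Measure Ω)
        [MeasureTheory.IsProbabilityMeasure μ] (U : ℕ → V → Ω → ℝ),
        (∀ t v, Measurable (U t v)) →
        iIndepFun (fun p : ℕ × V => fun ω => U p.1 p.2 ω) μ →
        (∀ t v, μ.map (U t v) = MeasureTheory.volume.restrict (Set.Ico (0 : ℝ) 1)) →
        ∀ (ℓ₁ : V → ℤ), (∀ v, -lmax v ≤ ℓ₁ v ∧ ℓ₁ v ≤ lmax v) →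
        ∀ (v : V) (t : ℕ), (∀ w, lmax w < (t : ℤ)) →
        ∀ H : Set Ω, MeasurableSet[Ft U t] H →
          (∀ ω ∈ H, ¬ Platinum G (level G lmax ℓ₁ U ω t) v ∧
            eta G lmax (level G lmax ℓ₁ U ω t) v ≤ 0.0001 ∧
            0.01 < dVal G lmax (level G lmax ℓ₁ U ω t) v ∧
            dLVal G lmax (level G lmax ℓ₁ U ω t) v <
              0.01 * dVal G lmax (level G lmax ℓ₁ U ω t) v) →
          ENNReal.ofReal 0.97 * μ H ≤
            μ ({ω | dVal G lmax (level G lmax ℓ₁ U ω (t + 1)) v <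
                  0.6 * dVal G lmax (level G lmax ℓ₁ U ω t) v ∨
                Platinum G (level G lmax ℓ₁ U ω (t + 1)) v} ∩ H) := by
  intro V _ _ G _ lmax hlmax Ω _ μ _ U hU hind hunif ℓ₁ _ v t ht H hH hHyp
  have ht0 : t ≠ 0 := by
    rintro rfl
    simpa using (hlmax v).trans_lt (ht v)
  have hround : iIndepFun (fun w ω => U t w ω) μ :=
    hind.precomp (g := fun w => (t, w)) fun _ _ h => (Prod.mk.inj h).2
  calc ENNReal.ofReal 0.97 * μ H
      ≤ μ ({ω | GoodRound G lmax (level G lmax ℓ₁ U ω t) v fun w => U t w ω} ∩ H) :=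
        le_measure_inter_of_indep (X := fun ω => level G lmax ℓ₁ U ω t)
          (E := fun c => (fun ω w => U t w ω) ⁻¹' {y | GoodRound G lmax c v y})
          (Ft_le hU t) (measurable_pi_lambda _ fun w => hU t w).comap_le
          (indep_Ft_round hU hind t)
          (fun c => measurable_level U le_rfl (measurableSet_singleton c))
          hH (fun c => ⟨_, measurableSet_goodRound G lmax c v, rfl⟩)
          fun ω hω => le_measure_goodRound (fun w => hU t w) hround (fun w => hunif t w) _
            (by linarith [(hHyp ω hω).2.2.1])
    _ ≤ _ := by
        refine measure_mono fun ω ⟨hgood, hωH⟩ => ⟨?_, hωH⟩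
        obtain ⟨hplat, heta, hd, hdL⟩ := hHyp ω hωH
        rw [Set.mem_ofPred_eq, level_succ U ht0]
        exact dVal_updateLevel_lt_or_platinum hlmax
          (fun w hw => (beepP_of_nonpos hw).symm ▸ hgood.1 w) hplat heta hd hdL hgood.2

end BeepMIS
end
end

section
/- For every initial configuration and every realization of the beeps consistent with the algorithm (a vertex beeps in round t whenever ℓ_t(v) ≤ 0 and never beeps when ℓ_t(v) = ℓ_max(v)), for every round t ≥ 1 it holds that I_t ⊆ I_{t+1} and S_t ⊆ S_{t+1}; that is, once a vertex joins the MIS set it remains in it forever, and the set of stable vertices is non-decreasing in t. -/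
/-! An MIS vertex `v` has level `-lmax v ≤ 0`, so it beeps, while `μ(v) = 1` pins every
neighbour at its maximal level, where it is silent. Hence `v` hears nothing and resets to
`-lmax v`, and every neighbour hears `v` and stays at its maximal level, so `v` is again an MIS
vertex. Reading `μ(v) = 1` this way needs the invariant that levels never exceed `lmax`. The
stable set is a monotone function of the MIS set. -/

open MeasureTheory ProbabilityTheory Real
open scoped ENNReal Classical

noncomputable section

namespace BeepMIS

theorem muVal_eq_one_iff {V : Type} [Fintype V] (G : SimpleGraph V) [DecidableRel G.Adj]
    {lmax ℓ : V → ℤ} (hpos : ∀ u, 0 < lmax u) (hle : ∀ u, ℓ u ≤ lmax u) (v : V) :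
    muVal G lmax ℓ v = 1 ↔ ∀ u, G.Adj v u → ℓ u = lmax u := by
  have hratio (u : V) : 1 ≤ (ℓ u : ℝ) / lmax u ↔ ℓ u = lmax u := by
    rw [one_le_div (by exact_mod_cast hpos u)]
    exact ⟨fun h => le_antisymm (hle u) (by exact_mod_cast h), fun h => by rw [h]⟩
  unfold muVal
  split_ifs with hne
  · obtain ⟨w, hw⟩ := id hne
    have hinf_le : (G.neighborFinset v).inf' hne (fun u => (ℓ u : ℝ) / lmax u) ≤ 1 :=
      (Finset.inf'_le _ hw).trans
        (div_le_one_of_le₀ (by exact_mod_cast hle w) (by exact_mod_cast (hpos w).le))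
    rw [le_antisymm_iff, and_iff_right hinf_le, Finset.le_inf'_iff]
    simp only [SimpleGraph.mem_neighborFinset, hratio]
  · simp only [Finset.not_nonempty_iff_eq_empty, Finset.eq_empty_iff_forall_notMem,
      SimpleGraph.mem_neighborFinset] at hne
    simp only [true_iff]
    exact fun u hadj => absurd hadj (hne u)

theorem updateLevel_le_lmax {V : Type} [Fintype V] [DecidableEq V] (G : SimpleGraph V)
    {lmax ℓ : V → ℤ} (b : V → Prop) {v : V} (hpos : 1 ≤ lmax v) (hle : ℓ v ≤ lmax v) :
    updateLevel G lmax ℓ b v ≤ lmax v := by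
  unfold updateLevel
  split_ifs <;> omega

theorem misSet_subset_misSet_updateLevel {V : Type} [Fintype V] [DecidableEq V]
    (G : SimpleGraph V) [DecidableRel G.Adj] {lmax ℓ : V → ℤ} {b : V → Prop}
    (hpos : ∀ u, 1 ≤ lmax u) (hle : ∀ u, ℓ u ≤ lmax u) (hbeep : ∀ u, ℓ u ≤ 0 → b u)
    (hsilent : ∀ u, ℓ u = lmax u → ¬ b u) :
    misSet G lmax ℓ ⊆ misSet G lmax (updateLevel G lmax ℓ b) := by
  rintro v ⟨hv_low, hv_mu⟩
  have hnbrs_max := (muVal_eq_one_iff G hpos hle v).1 hv_mu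
  have hv_beeps : b v := hbeep v (by linarith [hpos v])
  have hv_hears_nothing : ¬ ∃ u, G.Adj v u ∧ b u :=
    fun ⟨u, hadj, hu⟩ => hsilent u (hnbrs_max u hadj) hu
  refine ⟨by simp only [updateLevel, if_neg hv_hears_nothing, if_pos hv_beeps], ?_⟩
  refine (muVal_eq_one_iff G hpos (fun u => updateLevel_le_lmax G b (hpos u) (hle u)) v).2 ?_
  intro u hadj
  rw [updateLevel, if_pos ⟨v, hadj.symm, hv_beeps⟩, hnbrs_max u hadj]
  omega

theorem stableSet_subset_of_misSet_subset {V : Type} [Fintype V] (G : SimpleGraph V)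
    [DecidableRel G.Adj] {lmax ℓ ℓ' : V → ℤ}
    (h : misSet G lmax ℓ ⊆ misSet G lmax ℓ') :
    stableSet G lmax ℓ ⊆ stableSet G lmax ℓ' := by
  rintro w (hw | ⟨u, hu, hadj⟩)
  · exact Or.inl (h hw)
  · exact Or.inr ⟨u, h hu, hadj⟩

/-- for any realization of the beeps consistent with the algorithm,
`I_t ⊆ I_{t+1}` and `S_t ⊆ S_{t+1}` for every round `t ≥ 1`. -/
theorem statement13 :
    ∀ (V : Type) [Fintype V] [DecidableEq V] (G : SimpleGraph V) [DecidableRel G.Adj]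
      (lmax : V → ℤ), (∀ v, 1 ≤ lmax v) →
    ∀ (ℓ : ℕ → V → ℤ) (b : ℕ → V → Prop),
      (∀ v, -lmax v ≤ ℓ 1 v ∧ ℓ 1 v ≤ lmax v) →
      (∀ t, 1 ≤ t → ∀ v, ℓ (t + 1) v = updateLevel G lmax (ℓ t) (b t) v) →
      (∀ t, 1 ≤ t → ∀ v, ℓ t v ≤ 0 → b t v) →
      (∀ t, 1 ≤ t → ∀ v, ℓ t v = lmax v → ¬ b t v) →
      ∀ (t : ℕ), 1 ≤ t →
        misSet G lmax (ℓ t) ⊆ misSet G lmax (ℓ (t + 1)) ∧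
        stableSet G lmax (ℓ t) ⊆ stableSet G lmax (ℓ (t + 1)) := by
  intro V _ _ G _ lmax hpos ℓ b hinit hupd hbeep hsilent t ht
  have hle : ∀ s, 1 ≤ s → ∀ v, ℓ s v ≤ lmax v := by
    refine Nat.le_induction (fun v => (hinit v).2) fun s hs ih v => ?_
    rw [hupd s hs v]
    exact updateLevel_le_lmax G (b s) (hpos v) (ih v)
  have hmis : misSet G lmax (ℓ t) ⊆ misSet G lmax (ℓ (t + 1)) := by
    rw [show ℓ (t + 1) = updateLevel G lmax (ℓ t) (b t) from funext (hupd t ht)]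
    exact misSet_subset_misSet_updateLevel G hpos (hle t ht) (hbeep t ht) (hsilent t ht)
  exact ⟨hmis, stableSet_subset_of_misSet_subset G hmis⟩

end BeepMIS
end
end
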